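/- Let φ(t) = t²(t−1) and ψ(t) = 3t^{−1} − t^{−2}. Then the map ξ(t) = (φ(t), ψ(t)) = (t²(t−1), (3t−1)/t²) from ℂ* to ℂ² is injective, and its unique singular point t₁ = 2/3 (where φ'(t₁) = ψ'(t₁) = 0) is an A₂ cusp. -/

import Mathlib

/-- First coordinate of the seed of series (g): `φ(t) = t²(t−1)`. -/
noncomputable def phiG : ℂ → ℂ := fun t => t ^ 2 * (t - 1)

/-- Second coordinate: `ψ(t) = 3t⁻¹ − t⁻² = (3t−1)/t²`. -/
noncomputable def psiG : ℂ → ℂ := fun t => (3 * t - 1) / t ^ 2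

lemma hasDerivAt_phiG (t : ℂ) : HasDerivAt phiG (3 * t ^ 2 - 2 * t) t := by
  have h := (hasDerivAt_pow 2 t).mul ((hasDerivAt_id' t).sub_const 1)
  convert h using 1
  all_goals try rfl
  push_cast
  ring

lemma deriv_phiG : deriv phiG = fun t => 3 * t ^ 2 - 2 * t :=
  funext fun t => (hasDerivAt_phiG t).deriv

lemma hasDerivAt_psiG {t : ℂ} (ht : t ≠ 0) :
    HasDerivAt psiG ((2 - 3 * t) / t ^ 3) t := by
  have h := (((hasDerivAt_id' t).const_mul 3).sub_const 1).div
    (hasDerivAt_pow 2 t) (pow_ne_zero 2 ht)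
  convert h using 1
  all_goals try rfl
  field_simp
  ring

lemma hasDerivAt_g {t : ℂ} (ht : t ≠ 0) :
    HasDerivAt (fun t : ℂ => (2 - 3 * t) / t ^ 3) ((6 * t - 6) / t ^ 4) t := by
  have h := ((hasDerivAt_const t (2:ℂ)).sub ((hasDerivAt_id' t).const_mul 3)).div
    (hasDerivAt_pow 3 t) (pow_ne_zero 3 ht)
  convert h using 1
  all_goals try rfl
  simp only [Pi.sub_apply]
  field_simp
  ring

lemma hasDerivAt_h {t : ℂ} (ht : t ≠ 0) :
    HasDerivAt (fun t : ℂ => (6 * t - 6) / t ^ 4) ((24 - 18 * t) / t ^ 5) t := by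
  have h := (((hasDerivAt_id' t).const_mul 6).sub_const 6).div
    (hasDerivAt_pow 4 t) (pow_ne_zero 4 ht)
  convert h using 1
  all_goals try rfl
  field_simp
  ring

lemma ev_ne : ∀ᶠ t in nhds (2/3 : ℂ), t ≠ 0 :=
  eventually_ne_nhds (by norm_num)

lemma deriv_psiG_ev : deriv psiG =ᶠ[nhds (2/3 : ℂ)] fun t => (2 - 3 * t) / t ^ 3 :=
  ev_ne.mono fun t ht => (hasDerivAt_psiG ht).deriv

lemma deriv2_psiG_ev :
    deriv (deriv psiG) =ᶠ[nhds (2/3 : ℂ)] fun t => (6 * t - 6) / t ^ 4 := by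
  filter_upwards [deriv_psiG_ev.eventually_nhds, ev_ne] with t htriv ht
  rw [Filter.EventuallyEq.deriv_eq htriv, (hasDerivAt_g ht).deriv]

lemma iteratedDeriv2_psiG : iteratedDeriv 2 psiG (2/3) = -81/8 := by
  rw [iteratedDeriv_succ, iteratedDeriv_one, deriv2_psiG_ev.self_of_nhds]
  norm_num

lemma iteratedDeriv3_psiG : iteratedDeriv 3 psiG (2/3) = 729/8 := by
  rw [iteratedDeriv_succ, iteratedDeriv_succ, iteratedDeriv_one,
    Filter.EventuallyEq.deriv_eq deriv2_psiG_ev,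
    (hasDerivAt_h (by norm_num : (2/3:ℂ) ≠ 0)).deriv]
  norm_num

lemma hasDerivAt_dphi (t : ℂ) :
    HasDerivAt (fun t : ℂ => 3 * t ^ 2 - 2 * t) (6 * t - 2) t := by
  have h := ((hasDerivAt_pow 2 t).const_mul 3).sub ((hasDerivAt_id' t).const_mul 2)
  convert h using 1
  all_goals try rfl
  push_cast; ring

lemma iteratedDeriv2_phiG : iteratedDeriv 2 phiG (2/3) = 2 := by
  rw [iteratedDeriv_succ, iteratedDeriv_one, deriv_phiG,
    (hasDerivAt_dphi (2/3)).deriv]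
  norm_num

lemma iteratedDeriv3_phiG : iteratedDeriv 3 phiG (2/3) = 6 := by
  rw [iteratedDeriv_succ, iteratedDeriv_succ, iteratedDeriv_one, deriv_phiG]
  have hd : deriv (fun t : ℂ => 3 * t ^ 2 - 2 * t) = fun t => 6 * t - 2 :=
    funext fun t => (hasDerivAt_dphi t).deriv
  rw [hd]
  have h := ((hasDerivAt_id' (2/3:ℂ)).const_mul 6).sub_const 2
  have h' : HasDerivAt (fun t : ℂ => 6 * t - 2) 6 (2/3) := by
    convert h using 1 <;> first | rfl | norm_num
  rw [h'.deriv]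

theorem series_g_seed :
    Set.InjOn (fun t : ℂ => (phiG t, psiG t)) {t : ℂ | t ≠ 0} ∧
    (∀ t : ℂ, t ≠ 0 → (deriv phiG t = 0 ∧ deriv psiG t = 0 ↔ t = 2 / 3)) ∧
    iteratedDeriv 2 phiG (2 / 3) ≠ 0 ∧
    iteratedDeriv 2 psiG (2 / 3) * iteratedDeriv 3 phiG (2 / 3) ≠
      iteratedDeriv 2 phiG (2 / 3) * iteratedDeriv 3 psiG (2 / 3) := by
  refine ⟨?_, ?_, ?_, ?_⟩
  · intro s hs t ht h
    simp only [Set.mem_setOf_eq] at hs ht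
    have hφ : phiG s = phiG t := congrArg Prod.fst h
    have hψ : psiG s = psiG t := congrArg Prod.snd h
    have hps : (s - 1) * (3 * s - 1) = phiG s * psiG s := by
      unfold phiG psiG; field_simp
    have hpt : (t - 1) * (3 * t - 1) = phiG t * psiG t := by
      unfold phiG psiG; field_simp
    have hprod : (s - 1) * (3 * s - 1) = (t - 1) * (3 * t - 1) := by
      rw [hps, hpt, hφ, hψ]
    have hφ' : s ^ 2 * (s - 1) = t ^ 2 * (t - 1) := hφ
    by_contra hne
    have hst : s - t ≠ 0 := sub_ne_zero.mpr hne
    have ha : 3 * s + 3 * t - 4 = 0 := by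
      have : (s - t) * (3 * s + 3 * t - 4) = 0 := by linear_combination hprod
      exact (mul_eq_zero.mp this).resolve_left hst
    have hb : s ^ 2 + s * t + t ^ 2 - s - t = 0 := by
      have : (s - t) * (s ^ 2 + s * t + t ^ 2 - s - t) = 0 := by
        linear_combination hφ'
      exact (mul_eq_zero.mp this).resolve_left hst
    have : (s - t) ^ 2 = 0 := by linear_combination 4 * hb + (-s - t) * ha
    exact hst (sq_eq_zero_iff.mp this)
  · intro t ht
    constructor
    · rintro ⟨h1, -⟩
      rw [deriv_phiG] at h1
      have : t * (3 * t - 2) = 0 := by linear_combination h1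
      rcases mul_eq_zero.mp this with h | h
      · exact absurd h ht
      · field_simp
        linear_combination h
    · rintro rfl
      constructor
      · rw [deriv_phiG]; norm_num
      · rw [(hasDerivAt_psiG (by norm_num : (2/3:ℂ) ≠ 0)).deriv]; norm_num
  · rw [iteratedDeriv2_phiG]; norm_num
  · rw [iteratedDeriv2_phiG, iteratedDeriv2_psiG, iteratedDeriv3_phiG,
      iteratedDeriv3_psiG]
    norm_num
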